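/- The Bregman centroid of a compact domain D with density p coincides with the mass centroid: the unique minimizer over c of ∫_D p(x)·D_F(x||c) dx is c* = (∫_D p(x)·x dx) / (∫_D p(x) dx), independently of the choice of F. -/

import Mathlib

/-!
Integrating the three-point identity
`D_F(x‖c) - D_F(x‖c*) = D_F(c*‖c) + ⟪∇F(c*) - ∇F(c), x - c*⟫` against `ρ` kills the
inner-product term exactly when `c*` is the mass centroid, so the objective at `c` exceeds its
value at `c*` by `(∫ ρ) · D_F(c*‖c)`, which is positive for `c ≠ c*` by strict convexity.
The centroid lies in `D` because a weighted average of points of a closed convex set stays in it.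
-/

open scoped RealInnerProductSpace
open MeasureTheory Set

theorem StrictConvexOn.comp_affineMap {𝕜 E F β : Type*} [Field 𝕜] [LinearOrder 𝕜]
    [AddCommGroup E] [AddCommGroup F] [AddCommMonoid β] [PartialOrder β]
    [Module 𝕜 E] [Module 𝕜 F] [SMul 𝕜 β] {f : F → β} {g : E →ᵃ[𝕜] F}
    (hg : Function.Injective g) {s : Set F} (hf : StrictConvexOn 𝕜 s f) :
    StrictConvexOn 𝕜 (g ⁻¹' s) (f ∘ g) :=
  ⟨hf.1.affine_preimage _, fun x hx y hy hxy a b ha hb hab =>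
    calc
      (f ∘ g) (a • x + b • y) = f (a • g x + b • g y) := by
        rw [Function.comp_apply, Convex.combo_affine_apply hab]
      _ < a • f (g x) + b • f (g y) := hf.2 hx hy (hg.ne hxy) ha hb hab⟩

section InnerProductSpace

variable {E : Type*} [NormedAddCommGroup E] [InnerProductSpace ℝ E]

theorem StrictConvexOn.add_inner_lt_of_hasGradientAt [CompleteSpace E] {s : Set E} {F : E → ℝ}
    (hF : StrictConvexOn ℝ s F) {c z g : E} (hc : c ∈ s) (hz : z ∈ s) (hne : c ≠ z)
    (hg : HasGradientAt F g c) :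
    F c + ⟪g, z - c⟫ < F z := by
  have hline : StrictConvexOn ℝ (Icc (0 : ℝ) 1) (F ∘ AffineMap.lineMap c z) :=
    (hF.comp_affineMap (AffineMap.lineMap_injective ℝ hne)).subset
      (fun t ht => hF.1.lineMap_mem hc hz ht) (convex_Icc 0 1)
  have hderiv : HasDerivAt (F ∘ AffineMap.lineMap c z) ⟪g, z - c⟫ (0 : ℝ) := by
    have hF' :
        HasFDerivAt F (InnerProductSpace.toDual ℝ E g) (AffineMap.lineMap c z (0 : ℝ)) := by
      simpa using hg.hasFDerivAt
    simpa using hF'.comp_hasDerivAt (0 : ℝ) AffineMap.hasDerivAt_lineMap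
  have := hline.lt_slope_of_hasDerivAt (left_mem_Icc.2 zero_le_one) (right_mem_Icc.2 zero_le_one)
    zero_lt_one hderiv
  simp only [slope_def_field, Function.comp_apply, AffineMap.lineMap_apply_one,
    AffineMap.lineMap_apply_zero, sub_zero, div_one] at this
  linarith

def bregmanDiv (F : E → ℝ) (gradF : E → E) (x c : E) : ℝ :=
  F x - F c - ⟪gradF c, x - c⟫

theorem integral_mul_bregmanDiv_eq_add_of_centroid [CompleteSpace E] [MeasurableSpace E]
    {μ : Measure E} {ρ : E → ℝ} {F : E → ℝ} {gradF : E → E} {c c' : E} (hρ : Integrable ρ μ)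
    (hρx : Integrable (fun x => ρ x • x) μ)
    (hc : Integrable (fun x => ρ x * bregmanDiv F gradF x c) μ)
    (hc' : Integrable (fun x => ρ x * bregmanDiv F gradF x c') μ)
    (hcentroid : ∫ x, ρ x • x ∂μ = (∫ x, ρ x ∂μ) • c') :
    ∫ x, ρ x * bregmanDiv F gradF x c ∂μ =
      ∫ x, ρ x * bregmanDiv F gradF x c' ∂μ + (∫ x, ρ x ∂μ) * bregmanDiv F gradF c' c := by
  have hthree : ∀ x, ρ x * bregmanDiv F gradF x c - ρ x * bregmanDiv F gradF x c' =
      ρ x * bregmanDiv F gradF c' c + ⟪gradF c' - gradF c, ρ x • x - ρ x • c'⟫ := by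
    intro x
    simp only [bregmanDiv, ← smul_sub, inner_smul_right, inner_sub_left, inner_sub_right]
    ring
  have hρxc : Integrable (fun x => ρ x • x - ρ x • c') μ := hρx.sub (hρ.smul_const c')
  rw [← sub_eq_iff_eq_add', ← integral_sub hc hc', integral_congr_ae (ae_of_all _ hthree),
    integral_add (hρ.mul_const _) (hρxc.const_inner _), integral_mul_const, integral_inner hρxc,
    integral_sub hρx (hρ.smul_const c'), integral_smul_const, hcentroid, sub_self, inner_zero_right,
    add_zero]

theorem Convex.inv_integral_smul_integral_smul_mem [CompleteSpace E] {α : Type*}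
    [MeasurableSpace α] {μ : Measure α} {s : Set E} (hs : Convex ℝ s) (hsc : IsClosed s)
    {ρ : α → ℝ} {f : α → E}
    (hρ : 0 ≤ᵐ[μ] ρ) (hρi : Integrable ρ μ) (hρf : Integrable (fun a => ρ a • f a) μ)
    (hfs : ∀ᵐ a ∂μ, f a ∈ s) (hmass : 0 < ∫ a, ρ a ∂μ) :
    (∫ a, ρ a ∂μ)⁻¹ • ∫ a, ρ a • f a ∂μ ∈ s := by
  set ν := μ.withDensity fun a => ENNReal.ofReal (ρ a)
  have hdens : AEMeasurable (fun a => ENNReal.ofReal (ρ a)) μ := hρi.aemeasurable.ennreal_ofReal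
  have hfin : ∀ᵐ a ∂μ, ENNReal.ofReal (ρ a) < ⊤ := ae_of_all _ fun _ => ENNReal.ofReal_lt_top
  have hweight : (fun a => (ENNReal.ofReal (ρ a)).toReal • f a) =ᵐ[μ] fun a => ρ a • f a := by
    filter_upwards [hρ] with a ha
    rw [ENNReal.toReal_ofReal ha]
  have hν_univ : ν univ = ENNReal.ofReal (∫ a, ρ a ∂μ) := by
    rw [withDensity_apply _ MeasurableSet.univ, Measure.restrict_univ,
      ofReal_integral_eq_lintegral_ofReal hρi hρ]
  have : IsFiniteMeasure ν := ⟨by rw [hν_univ]; exact ENNReal.ofReal_lt_top⟩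
  have : NeZero ν := ⟨Measure.measure_univ_ne_zero.mp (by simpa [hν_univ] using hmass)⟩
  have hint : Integrable f ν :=
    (integrable_withDensity_iff_integrable_smul₀' hdens hfin).2 (hρf.congr hweight.symm)
  have hmem := hs.average_mem hsc ((withDensity_absolutelyContinuous μ _).ae_le hfs) hint
  rwa [average_eq, Measure.real, hν_univ, ENNReal.toReal_ofReal hmass.le,
    integral_withDensity_eq_integral_toReal_smul₀ hdens hfin, integral_congr_ae hweight] at hmem

end InnerProductSpace

theorem bregman_centroid_eq_mass_centroid_general {d : ℕ}
    (X : Set (EuclideanSpace ℝ (Fin d)))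
    (F : EuclideanSpace ℝ (Fin d) → ℝ)
    (gradF : EuclideanSpace ℝ (Fin d) → EuclideanSpace ℝ (Fin d))
    (hF : StrictConvexOn ℝ X F)
    (hgrad : ∀ x ∈ X, HasGradientAt F (gradF x) x)
    (D : Set (EuclideanSpace ℝ (Fin d))) (hDX : D ⊆ X)
    (hDcomp : IsCompact D) (hDconv : Convex ℝ D)
    (ρ : EuclideanSpace ℝ (Fin d) → ℝ) (hρ : ∀ x, 0 ≤ ρ x)
    (hρint : IntegrableOn ρ D)
    (hρxint : IntegrableOn (fun x => ρ x • x) D)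
    (hmass : 0 < ∫ x in D, ρ x)
    (hDiv : ∀ c ∈ D,
      IntegrableOn (fun x => ρ x * (F x - F c - ⟪gradF c, x - c⟫)) D)
    (cstar : EuclideanSpace ℝ (Fin d))
    (hcstar : cstar = (∫ x in D, ρ x)⁻¹ • ∫ x in D, ρ x • x) :
    cstar ∈ D ∧
    (∀ c ∈ D,
      (∫ x in D, ρ x * (F x - F cstar - ⟪gradF cstar, x - cstar⟫))
        ≤ ∫ x in D, ρ x * (F x - F c - ⟪gradF c, x - c⟫)) ∧
    (∀ c ∈ D, c ≠ cstar →
      (∫ x in D, ρ x * (F x - F cstar - ⟪gradF cstar, x - cstar⟫))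
        < ∫ x in D, ρ x * (F x - F c - ⟪gradF c, x - c⟫)) := by
  have hcstar_mem : cstar ∈ D := hcstar ▸ hDconv.inv_integral_smul_integral_smul_mem
    hDcomp.isClosed (ae_of_all _ hρ) hρint hρxint
    (ae_restrict_mem hDcomp.isClosed.measurableSet) hmass
  have hcentroid : ∫ x in D, ρ x • x = (∫ x in D, ρ x) • cstar := by
    rw [hcstar, smul_inv_smul₀ hmass.ne']
  have hsplit (c : EuclideanSpace ℝ (Fin d)) (hc : c ∈ D) :=
    integral_mul_bregmanDiv_eq_add_of_centroid hρint hρxint (hDiv c hc) (hDiv cstar hcstar_mem)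
      hcentroid
  have hgap (c : EuclideanSpace ℝ (Fin d)) (hc : c ∈ D) (hne : c ≠ cstar) :
      0 < bregmanDiv F gradF cstar c := by
    have := hF.add_inner_lt_of_hasGradientAt (hDX hc) (hDX hcstar_mem) hne (hgrad c (hDX hc))
    rw [bregmanDiv]
    linarith
  refine ⟨hcstar_mem, fun c hc => ?_, fun c hc hne => ?_⟩
  · rcases eq_or_ne c cstar with rfl | hne
    · exact le_rfl
    · exact (hsplit c hc).symm ▸ le_add_of_nonneg_right (mul_pos hmass (hgap c hc hne)).le
  · exact (hsplit c hc).symm ▸ lt_add_of_pos_right _ (mul_pos hmass (hgap c hc hne))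

/-- The Bregman centroid of a compact convex domain `D` with density `ρ` coincides with the
mass centroid: the unique minimizer over `c ∈ D` of `∫_D ρ(x) D_F(x‖c) dx` is
`c* = (∫_D ρ(x) x dx) / (∫_D ρ(x) dx)`, independently of `F`. -/
theorem bregman_centroid_eq_mass_centroid {d : ℕ}
    (X : Set (EuclideanSpace ℝ (Fin d))) (hXopen : IsOpen X) (hXconv : Convex ℝ X)
    (F : EuclideanSpace ℝ (Fin d) → ℝ)
    (gradF : EuclideanSpace ℝ (Fin d) → EuclideanSpace ℝ (Fin d))
    (hF : StrictConvexOn ℝ X F)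
    (hF2 : ContDiffOn ℝ 2 F X)
    (hgrad : ∀ x ∈ X, HasGradientAt F (gradF x) x)
    (D : Set (EuclideanSpace ℝ (Fin d))) (hDX : D ⊆ X)
    (hDcomp : IsCompact D) (hDconv : Convex ℝ D) (hDne : D.Nonempty)
    (ρ : EuclideanSpace ℝ (Fin d) → ℝ) (hρ : ∀ x, 0 ≤ ρ x)
    (hρint : IntegrableOn ρ D)
    (hρxint : IntegrableOn (fun x => ρ x • x) D)
    (hmass : 0 < ∫ x in D, ρ x)
    (hDiv : ∀ c ∈ D,
      IntegrableOn (fun x => ρ x * (F x - F c - ⟪gradF c, x - c⟫)) D)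
    (cstar : EuclideanSpace ℝ (Fin d))
    (hcstar : cstar = (∫ x in D, ρ x)⁻¹ • ∫ x in D, ρ x • x) :
    cstar ∈ D ∧
    (∀ c ∈ D,
      (∫ x in D, ρ x * (F x - F cstar - ⟪gradF cstar, x - cstar⟫))
        ≤ ∫ x in D, ρ x * (F x - F c - ⟪gradF c, x - c⟫)) ∧
    (∀ c ∈ D, c ≠ cstar →
      (∫ x in D, ρ x * (F x - F cstar - ⟪gradF cstar, x - cstar⟫))
        < ∫ x in D, ρ x * (F x - F c - ⟪gradF c, x - c⟫)) :=
  bregman_centroid_eq_mass_centroid_general X F gradF hF hgrad D hDX hDcomp hDconv ρ hρ hρint hρxint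
    hmass hDiv cstar hcstar
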